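/- With the notation of the previous statement, for all $k, s \in \mathbb{Z}^n$ and $z \in \mathbb{C}^n$: $\vartheta_{D, k + Ds}(z) = (-1)^{\xi(s)} e^{\pi i \langle A s, D^{-1}k \rangle} \vartheta_{D,k}(z)$, where $A = \mathrm{Re}\,\tau D - D^T \mathrm{Re}\,\tau^T$. In particular, up to unit scalars, $\vartheta_{D,k}$ depends only on $k \bmod D\mathbb{Z}^n$, and the theta functions $\{\vartheta_{D,k}\}_{k \in \mathbb{Z}^n/D\mathbb{Z}^n}$ span a space of dimension at most $|\det D|$. -/
import Mathlib


open Matrix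

private lemma exp_pi_I_int (t : ℤ) :
    Complex.exp (Real.pi * Complex.I * (t : ℂ)) = (-1 : ℂ) ^ t := by
  rw [mul_comm, Complex.exp_int_mul, Complex.exp_pi_mul_I]

private lemma neg_one_pow_val_add (a b : ZMod 2) :
    ((-1 : ℂ)) ^ ((a + b).val) = (-1) ^ a.val * (-1) ^ b.val := by
  have h : ∀ x : ZMod 2, x = 0 ∨ x = 1 := by decide
  rcases h a with rfl | rfl <;> rcases h b with rfl | rfl <;>
    norm_num [show ZMod.val (0 : ZMod 2) = 0 from rfl, show ZMod.val (1 : ZMod 2) = 1 from rfl,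
      show ZMod.val ((1 : ZMod 2) + 1) = 0 from rfl, show ZMod.val (2 : ZMod 2) = 0 from rfl]

private lemma neg_one_pow_val_intCast (t : ℤ) :
    ((-1 : ℂ)) ^ (((t : ZMod 2)).val) = (-1 : ℂ) ^ t := by
  rcases Int.even_or_odd t with h | h
  · have h2 : ((t : ZMod 2)) = 0 := by
      rw [ZMod.intCast_zmod_eq_zero_iff_dvd]
      exact_mod_cast h.two_dvd
    rw [h2, h.neg_one_zpow]
    norm_num
  · have h2 : ((t : ZMod 2)) = 1 := by
      obtain ⟨c, rfl⟩ := h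
      push_cast
      rw [show ((2 : ZMod 2)) = 0 from rfl]
      ring
    rw [h2, h.neg_one_zpow]
    norm_num [show ZMod.val (1 : ZMod 2) = 1 from rfl]

private lemma skew_dot {n : ℕ} {A : Matrix (Fin n) (Fin n) ℂ} (hA : Aᵀ = -A)
    (u v : Fin n → ℂ) : dotProduct u (A.mulVec v) = - dotProduct v (A.mulVec u) := by
  rw [Matrix.dotProduct_mulVec, ← Matrix.mulVec_transpose, hA, Matrix.neg_mulVec,
    neg_dotProduct, dotProduct_comm]

private lemma dot_cast {n : ℕ} (AZ : Matrix (Fin n) (Fin n) ℤ) (m s : Fin n → ℤ) :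
    ((dotProduct m (AZ.mulVec s) : ℤ) : ℂ) =
      dotProduct (fun i => (m i : ℂ)) ((AZ.map (Int.cast : ℤ → ℂ)).mulVec (fun i => (s i : ℂ))) := by
  simp [dotProduct, mulVec, Matrix.map_apply]


/-- The multivariate theta function
`ϑ_{D,k}(z) = ∑_{m ∈ ℤⁿ} (-1)^{ξ(m)} e^{πi⟨D⁻¹k, Am⟩}
  e^{πi⟨τD(m-D⁻¹k), m-D⁻¹k⟩} e^{2πi⟨Dm-k, z⟩}`. -/
noncomputable def thetaMulti (n : ℕ) (τ : Matrix (Fin n) (Fin n) ℂ)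
    (D : Matrix (Fin n) (Fin n) ℤ) (ξ : (Fin n → ℤ) → ZMod 2)
    (k : Fin n → ℤ) (z : Fin n → ℂ) : ℂ :=
  let DC : Matrix (Fin n) (Fin n) ℂ := D.map (Int.cast : ℤ → ℂ)
  let Reτ : Matrix (Fin n) (Fin n) ℂ := τ.map (fun x => (x.re : ℂ))
  let A : Matrix (Fin n) (Fin n) ℂ := Reτ * DC - DCᵀ * Reτᵀ
  let kC : Fin n → ℂ := fun i => (k i : ℂ)
  let p : Fin n → ℂ := DC⁻¹.mulVec kC
  ∑' m : Fin n → ℤ,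
    (-1 : ℂ) ^ ((ξ m).val) *
    Complex.exp (Real.pi * Complex.I * dotProduct p (A.mulVec (fun i => (m i : ℂ)))) *
    Complex.exp (Real.pi * Complex.I *
      dotProduct ((τ * DC).mulVec ((fun i => (m i : ℂ)) - p)) ((fun i => (m i : ℂ)) - p)) *
    Complex.exp (2 * Real.pi * Complex.I *
      dotProduct (DC.mulVec (fun i => (m i : ℂ)) - kC) z)

private lemma thetaMulti_translate (n : ℕ) (τ : Matrix (Fin n) (Fin n) ℂ)
    (D : Matrix (Fin n) (Fin n) ℤ) (hD : IsUnit D.det)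
    (AZ : Matrix (Fin n) (Fin n) ℤ)
    (hAZC : AZ.map (Int.cast : ℤ → ℂ) =
      τ.map (fun x => (x.re : ℂ)) * D.map (Int.cast : ℤ → ℂ)
        - (D.map (Int.cast : ℤ → ℂ))ᵀ * (τ.map (fun x => (x.re : ℂ)))ᵀ)
    (ξ : (Fin n → ℤ) → ZMod 2)
    (hξ : ∀ m₁ m₂ : Fin n → ℤ, ξ (m₁ + m₂) = ξ m₁ + ξ m₂ +
      ((dotProduct m₁ (AZ.mulVec m₂) : ℤ) : ZMod 2))
    (k s : Fin n → ℤ) (z : Fin n → ℂ) :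
    thetaMulti n τ D ξ (k + D.mulVec s) z =
      (-1 : ℂ) ^ ((ξ s).val) *
      Complex.exp (Real.pi * Complex.I *
        dotProduct ((AZ.map (Int.cast : ℤ → ℂ)).mulVec (fun i => (s i : ℂ)))
          (((D.map (Int.cast : ℤ → ℂ))⁻¹).mulVec (fun i => (k i : ℂ)))) *
      thetaMulti n τ D ξ k z := by
  simp only [thetaMulti]
  rw [← hAZC]
  set DC : Matrix (Fin n) (Fin n) ℂ := D.map (Int.cast : ℤ → ℂ) with hDCdef
  set A : Matrix (Fin n) (Fin n) ℂ := AZ.map (Int.cast : ℤ → ℂ) with hAdef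
  set kC : Fin n → ℂ := fun i => (k i : ℂ) with hkCdef
  set sC : Fin n → ℂ := fun i => (s i : ℂ) with hsCdef
  have hDC : IsUnit DC.det := by
    have h1 := (Int.castRingHom ℂ).map_det D
    simp only [RingHom.mapMatrix_apply, Int.coe_castRingHom] at h1
    rw [hDCdef, ← h1]
    exact hD.map (Int.castRingHom ℂ)
  have hAT : Aᵀ = -A := by
    rw [hAZC]
    simp only [Matrix.transpose_sub, Matrix.transpose_mul, Matrix.transpose_transpose]
    rw [← neg_sub]
  have hkC : (fun i => ((k + D.mulVec s) i : ℂ)) = kC + DC.mulVec sC := by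
    funext i
    simp [mulVec, dotProduct, Matrix.map_apply, hkCdef, hsCdef, hDCdef]
  have hp' : DC⁻¹.mulVec (kC + DC.mulVec sC) = DC⁻¹.mulVec kC + sC := by
    rw [Matrix.mulVec_add, Matrix.mulVec_mulVec, Matrix.nonsing_inv_mul _ hDC,
      Matrix.one_mulVec]
  set p : Fin n → ℂ := DC⁻¹.mulVec kC with hpdef
  rw [hkC, hp']
  rw [← Equiv.tsum_eq (Equiv.addRight s), ← tsum_mul_left]
  refine tsum_congr fun m => ?_
  simp only [Equiv.coe_addRight]
  set mC : Fin n → ℂ := fun i => (m i : ℂ) with hmCdef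
  have hc : (fun i => (((m + s) i : ℤ) : ℂ)) = mC + sC := by
    funext i
    simp [hmCdef, hsCdef]
  rw [hc]
  rw [show (mC + sC) - (p + sC) = mC - p from by abel]
  rw [show DC.mulVec (mC + sC) - (kC + DC.mulVec sC) = DC.mulVec mC - kC from by
    rw [Matrix.mulVec_add]; abel]
  -- sign
  rw [hξ m s]
  have hδ : ((dotProduct m (AZ.mulVec s) : ℤ) : ℂ) = dotProduct mC (A.mulVec sC) :=
    dot_cast AZ m s
  have hsign : (-1 : ℂ) ^ ((ξ m + ξ s + ((dotProduct m (AZ.mulVec s) : ℤ) : ZMod 2)).val)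
      = (-1 : ℂ) ^ ((ξ m).val) * (-1 : ℂ) ^ ((ξ s).val) *
        Complex.exp (Real.pi * Complex.I * dotProduct mC (A.mulVec sC)) := by
    rw [neg_one_pow_val_add, neg_one_pow_val_add, neg_one_pow_val_intCast,
      ← exp_pi_I_int, hδ]
  rw [hsign]
  have hskew_sm : dotProduct sC (A.mulVec mC) = - dotProduct mC (A.mulVec sC) :=
    skew_dot hAT sC mC
  have hskew_ss : dotProduct sC (A.mulVec sC) = 0 := by
    have h0 := skew_dot hAT sC sC
    linear_combination h0 / 2
  have key : Complex.exp (Real.pi * Complex.I * dotProduct mC (A.mulVec sC)) *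
      Complex.exp (Real.pi * Complex.I * dotProduct (p + sC) (A.mulVec (mC + sC)))
      = Complex.exp (Real.pi * Complex.I * dotProduct (A.mulVec sC) p) *
        Complex.exp (Real.pi * Complex.I * dotProduct p (A.mulVec mC)) := by
    rw [← Complex.exp_add, ← Complex.exp_add]
    congr 1
    have e1 : dotProduct (p + sC) (A.mulVec (mC + sC)) =
        dotProduct p (A.mulVec mC) + dotProduct sC (A.mulVec mC) +
        dotProduct p (A.mulVec sC) + dotProduct sC (A.mulVec sC) := by
      simp only [Matrix.mulVec_add, dotProduct_add, add_dotProduct]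
      ring
    rw [e1, hskew_sm, hskew_ss, dotProduct_comm (A.mulVec sC) p]
    ring
  calc (-1 : ℂ) ^ ((ξ m).val) * (-1 : ℂ) ^ ((ξ s).val) *
        Complex.exp (Real.pi * Complex.I * dotProduct mC (A.mulVec sC)) *
        Complex.exp (Real.pi * Complex.I * dotProduct (p + sC) (A.mulVec (mC + sC))) *
        Complex.exp (Real.pi * Complex.I *
          dotProduct ((τ * DC).mulVec (mC - p)) (mC - p)) *
        Complex.exp (2 * Real.pi * Complex.I * dotProduct (DC.mulVec mC - kC) z)
      = ((-1 : ℂ) ^ ((ξ m).val) * (-1 : ℂ) ^ ((ξ s).val) *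
          Complex.exp (Real.pi * Complex.I *
            dotProduct ((τ * DC).mulVec (mC - p)) (mC - p)) *
          Complex.exp (2 * Real.pi * Complex.I * dotProduct (DC.mulVec mC - kC) z)) *
        (Complex.exp (Real.pi * Complex.I * dotProduct mC (A.mulVec sC)) *
          Complex.exp (Real.pi * Complex.I * dotProduct (p + sC) (A.mulVec (mC + sC)))) := by
        ring
    _ = ((-1 : ℂ) ^ ((ξ m).val) * (-1 : ℂ) ^ ((ξ s).val) *
          Complex.exp (Real.pi * Complex.I *
            dotProduct ((τ * DC).mulVec (mC - p)) (mC - p)) *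
          Complex.exp (2 * Real.pi * Complex.I * dotProduct (DC.mulVec mC - kC) z)) *
        (Complex.exp (Real.pi * Complex.I * dotProduct (A.mulVec sC) p) *
          Complex.exp (Real.pi * Complex.I * dotProduct p (A.mulVec mC))) := by
        rw [key]
    _ = (-1 : ℂ) ^ ((ξ s).val) *
        Complex.exp (Real.pi * Complex.I * dotProduct (A.mulVec sC) p) *
        ((-1 : ℂ) ^ ((ξ m).val) *
          Complex.exp (Real.pi * Complex.I * dotProduct p (A.mulVec mC)) *
          Complex.exp (Real.pi * Complex.I *
            dotProduct ((τ * DC).mulVec (mC - p)) (mC - p)) *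
          Complex.exp (2 * Real.pi * Complex.I * dotProduct (DC.mulVec mC - kC) z)) := by
        ring


/-- `ϑ_{D,k+Ds} = (-1)^{ξ(s)} e^{πi⟨As, D⁻¹k⟩} ϑ_{D,k}`; in particular,
up to unit scalars `ϑ_{D,k}` depends only on `k mod Dℤⁿ` and the theta functions
span a space of dimension at most `|det D|`. -/
theorem thetaMulti_translation_and_span
    (n : ℕ) (τ : Matrix (Fin n) (Fin n) ℂ) (D : Matrix (Fin n) (Fin n) ℤ)
    (hD : IsUnit D.det)
    (hImSymm : (τ.map Complex.im).IsSymm)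
    (hImPos : (τ.map Complex.im).PosDef)
    (hImD : τ.map Complex.im * D.map (Int.cast : ℤ → ℝ)
      = (D.map (Int.cast : ℤ → ℝ))ᵀ * (τ.map Complex.im)ᵀ)
    (hImDPos : (τ.map Complex.im * D.map (Int.cast : ℤ → ℝ)).PosDef)
    (AZ : Matrix (Fin n) (Fin n) ℤ)
    (hAZ : AZ.map (Int.cast : ℤ → ℝ) =
      τ.map Complex.re * D.map (Int.cast : ℤ → ℝ)
        - (D.map (Int.cast : ℤ → ℝ))ᵀ * (τ.map Complex.re)ᵀ)
    (ξ : (Fin n → ℤ) → ZMod 2)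
    (hξ : ∀ m₁ m₂ : Fin n → ℤ, ξ (m₁ + m₂) = ξ m₁ + ξ m₂ +
      ((dotProduct m₁ (AZ.mulVec m₂) : ℤ) : ZMod 2)) :
    (∀ (k s : Fin n → ℤ) (z : Fin n → ℂ),
      thetaMulti n τ D ξ (k + D.mulVec s) z =
        (-1 : ℂ) ^ ((ξ s).val) *
        Complex.exp (Real.pi * Complex.I *
          dotProduct ((AZ.map (Int.cast : ℤ → ℂ)).mulVec (fun i => (s i : ℂ)))
            (((D.map (Int.cast : ℤ → ℂ))⁻¹).mulVec (fun i => (k i : ℂ)))) *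
        thetaMulti n τ D ξ k z) ∧
    Module.rank ℂ
        ↥(Submodule.span ℂ (Set.range (fun k : Fin n → ℤ => thetaMulti n τ D ξ k)))
      ≤ (D.det.natAbs : Cardinal) := by
  have hAZC : AZ.map (Int.cast : ℤ → ℂ) =
      τ.map (fun x => (x.re : ℂ)) * D.map (Int.cast : ℤ → ℂ)
        - (D.map (Int.cast : ℤ → ℂ))ᵀ * (τ.map (fun x => (x.re : ℂ)))ᵀ := by
    ext i j
    have h : (AZ.map (Int.cast : ℤ → ℝ)) i j =
        (τ.map Complex.re * D.map (Int.cast : ℤ → ℝ)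
          - (D.map (Int.cast : ℤ → ℝ))ᵀ * (τ.map Complex.re)ᵀ) i j := by rw [hAZ]
    simp only [Matrix.sub_apply, Matrix.mul_apply, Matrix.transpose_apply,
      Matrix.map_apply] at h ⊢
    have h2 := congrArg (Complex.ofReal) h
    push_cast at h2 ⊢
    exact h2
  have htrans := thetaMulti_translate n τ D hD AZ hAZC ξ hξ
  refine ⟨htrans, ?_⟩
  -- rank bound
  have hdet1 : (D.det.natAbs : Cardinal) = 1 := by
    rcases Int.isUnit_iff.mp hD with h | h <;> simp [h]
  rw [hdet1]
  set g : (Fin n → ℤ) → (Fin n → ℂ) → ℂ := fun k => thetaMulti n τ D ξ k with hg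
  have hmem : ∀ k : Fin n → ℤ, g k ∈ Submodule.span ℂ ({g 0} : Set ((Fin n → ℂ) → ℂ)) := by
    intro k
    have hk : (0 : Fin n → ℤ) + D.mulVec (D⁻¹.mulVec k) = k := by
      rw [Matrix.mulVec_mulVec, Matrix.mul_nonsing_inv _ hD, Matrix.one_mulVec, zero_add]
    have hgk : g k = ((-1 : ℂ) ^ ((ξ (D⁻¹.mulVec k)).val) *
        Complex.exp (Real.pi * Complex.I *
          dotProduct ((AZ.map (Int.cast : ℤ → ℂ)).mulVec (fun i => ((D⁻¹.mulVec k) i : ℂ)))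
            (((D.map (Int.cast : ℤ → ℂ))⁻¹).mulVec (fun i => ((0 : Fin n → ℤ) i : ℂ))))) • g 0 := by
      funext z
      have := htrans 0 (D⁻¹.mulVec k) z
      rw [hk] at this
      simpa [hg, smul_eq_mul, mul_assoc] using this
    rw [hgk]
    exact Submodule.smul_mem _ _ (Submodule.mem_span_singleton_self _)
  have hle : Submodule.span ℂ (Set.range g) ≤ Submodule.span ℂ ({g 0} : Set _) := by
    rw [Submodule.span_le]
    rintro _ ⟨k, rfl⟩
    exact hmem k
  calc Module.rank ℂ ↥(Submodule.span ℂ (Set.range g))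
      ≤ Module.rank ℂ ↥(Submodule.span ℂ ({g 0} : Set _)) := Submodule.rank_mono hle
    _ ≤ Cardinal.mk ({g 0} : Set ((Fin n → ℂ) → ℂ)) := rank_span_le _
    _ = 1 := Cardinal.mk_singleton _
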